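/- arXiv:2001.03750 — 3 statements merged into one kernel-verified Lean document; each statement's English description precedes it below -/
import Mathlib

section
/- Unit triangular factorization of the matrix symplectic group: for every real 2d-by-2d symplectic matrix H (i.e., H^T J H = J), there exist symmetric d-by-d real matrices S_1, S_2, ..., S_9 such that H = P_9 P_8 ... P_2 P_1, where P_i is the unit upper triangular symplectic block matrix [[I, S_i],[0, I]] for odd i and the unit lower triangular symplectic block matrix [[I, 0],[S_i, I]] for even i. In other words, SP = L_9. -/
/-!
Write `H = [[A, B], [C, D]]`. The relations `Hᵀ J H = J` say that `Aᵀ C` is symmetric and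
`Aᵀ D - Cᵀ B = I`, so `A` and `C` have no common kernel vector; hence `A + μ C` is invertible for
some real `μ`, and a left factor `[[I, μ I], [0, I]]` makes the upper-left block `A₁` invertible.
By the Taussky–Zassenhaus theorem there is an invertible symmetric `S` with `A₁ᵀ S = S A₁`; the
lower factor with block `S - C A₁⁻¹` then makes the lower-left block equal to the invertible
symmetric matrix `S A₁`. A symplectic matrix whose lower-left block `C` is invertible and symmetric
is `[[I, (A - I) C⁻¹], [0, I]] [[I, 0], [C, I]] [[I, C⁻¹ (D - I)], [0, I]]`. So five unit triangular
factors suffice, and the remaining four are taken to be the identity.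

Taussky–Zassenhaus: as an `ℝ[X]`-module via `A₁`, `ℝⁿ` is a direct sum of cyclic modules
`ℝ[X] ⧸ (g)`. Each carries the symmetric form `(p, q) ↦ ℓ (p q)` for a functional `ℓ` whose
kernel contains no nonzero ideal, and multiplication by `X` is self-adjoint for it. The Gram
matrix of the orthogonal sum of these forms is the required `S`.
-/

open Matrix

def Jmat (d : ℕ) : Matrix (Fin d ⊕ Fin d) (Fin d ⊕ Fin d) ℝ :=
  Matrix.fromBlocks 0 1 (-1) 0

open Polynomial

/-- The coefficient of `X ^ (deg g - 1)` in the remainder modulo `g` makes `K[X] ⧸ (g)` a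
Frobenius algebra. -/
theorem Polynomial.exists_linearMap_nondegenerate_mod {K : Type*} [Field K] {g : K[X]}
    (hg : g ≠ 0) :
    ∃ ℓ : K[X] →ₗ[K] K, (∀ p, g ∣ p → ℓ p = 0) ∧ ∀ p, ¬ g ∣ p → ∃ q, ℓ (p * q) ≠ 0 := by
  set n := g.natDegree
  refine ⟨(lcoeff K (n - 1)).comp (modByMonicHom (g * C g.leadingCoeff⁻¹)), fun p hp => ?_,
    fun p hp => ?_⟩
  · change (p % g).coeff (n - 1) = 0
    rw [EuclideanDomain.mod_eq_zero.2 hp, coeff_zero]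
  set r := p % g
  have hr : r ≠ 0 := mt EuclideanDomain.mod_eq_zero.1 hp
  have hrn : r.natDegree < n := natDegree_lt_natDegree hr (degree_mod_lt p hg)
  obtain ⟨m, hm⟩ : ∃ m, n - 1 = r.natDegree + m := Nat.exists_eq_add_of_le (by omega)
  refine ⟨X ^ m, ?_⟩
  change ((p * X ^ m) % g).coeff (n - 1) ≠ 0
  have hpr : (p * X ^ m) % g = r * X ^ m := by
    rw [mod_eq_of_dvd_sub (q := g) (p₂ := r * X ^ m), mod_eq_self_iff hg]
    · rw [degree_mul, degree_X_pow, degree_eq_natDegree hr, degree_eq_natDegree hg]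
      exact_mod_cast (by omega : r.natDegree + m < n)
    · exact ⟨p / g * X ^ m, by
        rw [show r = p - g * (p / g) from EuclideanDomain.mod_eq_sub_mul_div p g]; ring⟩
  rw [hpr, hm, coeff_mul_X_pow]
  exact leadingCoeff_ne_zero.2 hr

def HasSelfAdjointForm (K M : Type*) [Field K] [AddCommGroup M] [Module K[X] M] [Module K M] :
    Prop :=
  ∃ B : M →ₗ[K] M →ₗ[K] K, (∀ x y, B x y = B y x) ∧ B.SeparatingLeft ∧
    ∀ (c : K[X]) x y, B (c • x) y = B x (c • y)

namespace HasSelfAdjointForm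

variable {K : Type*} [Field K]

theorem quotient_span_singleton {g : K[X]} (hg : g ≠ 0) :
    HasSelfAdjointForm K (K[X] ⧸ K[X] ∙ g) := by
  obtain ⟨ℓ, hℓ, hnd⟩ := exists_linearMap_nondegenerate_mod hg
  set P := K[X] ∙ g
  set f := (LinearMap.mul K K[X]).compr₂ ℓ
  have hker : ∀ p ∈ P, ∀ q, ℓ (p * q) = 0 := fun p hp q =>
    hℓ _ (dvd_mul_of_dvd_left (Ideal.mem_span_singleton.1 hp) q)
  have hP : P.restrictScalars K ≤ f.ker := fun p hp =>
    LinearMap.mem_ker.2 (LinearMap.ext fun q => hker p hp q)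
  have hP' : P.restrictScalars K ≤ f.flip.ker := fun p hp =>
    LinearMap.mem_ker.2 (LinearMap.ext fun q => (mul_comm q p ▸ hker p hp q :))
  set e := (Submodule.Quotient.restrictScalarsEquiv K P).symm.toLinearMap
  set B := (f.liftQ₂ _ _ hP hP').compl₁₂ e e
  have hB : ∀ p q, B (Submodule.Quotient.mk p) (Submodule.Quotient.mk q) = ℓ (p * q) :=
    fun _ _ => rfl
  refine ⟨B, fun x y => ?_, fun x hx => ?_, fun c x y => ?_⟩
  · obtain ⟨p, rfl⟩ := Submodule.Quotient.mk_surjective P x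
    obtain ⟨q, rfl⟩ := Submodule.Quotient.mk_surjective P y
    rw [hB, hB, mul_comm]
  · obtain ⟨p, rfl⟩ := Submodule.Quotient.mk_surjective P x
    rw [Submodule.Quotient.mk_eq_zero]
    by_contra hp
    obtain ⟨q, hq⟩ := hnd p (mt Ideal.mem_span_singleton.2 hp)
    exact hq (hx (Submodule.Quotient.mk q))
  · obtain ⟨p, rfl⟩ := Submodule.Quotient.mk_surjective P x
    obtain ⟨q, rfl⟩ := Submodule.Quotient.mk_surjective P y
    rw [← Submodule.Quotient.mk_smul, ← Submodule.Quotient.mk_smul, hB, hB, smul_eq_mul,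
      smul_eq_mul, mul_assoc, mul_left_comm]

theorem of_linearEquiv {M N : Type*} [AddCommGroup M] [Module K[X] M] [Module K M]
    [IsScalarTower K K[X] M] [AddCommGroup N] [Module K[X] N] [Module K N]
    [IsScalarTower K K[X] N] (e : M ≃ₗ[K[X]] N) (h : HasSelfAdjointForm K N) :
    HasSelfAdjointForm K M := by
  obtain ⟨B, hsymm, hsep, hadj⟩ := h
  let e' := (e.restrictScalars K).toLinearMap
  refine ⟨B.compl₁₂ e' e', fun x y => hsymm _ _, fun x hx => ?_, fun c x y => ?_⟩
  · refine e.map_eq_zero_iff.1 (hsep _ fun z => ?_)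
    simpa [e'] using hx (e.symm z)
  · simpa [e'] using hadj c (e x) (e y)

theorem directSum {ι : Type*} [Fintype ι] [DecidableEq ι] {M : ι → Type*}
    [∀ i, AddCommGroup (M i)] [∀ i, Module K[X] (M i)] [∀ i, Module K (M i)]
    (h : ∀ i, HasSelfAdjointForm K (M i)) : HasSelfAdjointForm K (DirectSum ι M) := by
  choose β hsymm hsep hadj using h
  let B := ∑ i, (β i).compl₁₂ (DirectSum.component K ι M i) (DirectSum.component K ι M i)
  have hB : ∀ x y, B x y = ∑ i, β i (x i) (y i) := by
    simp [B, ← DirectSum.apply_eq_component]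
  refine ⟨B, fun x y => by simp only [hB, hsymm], fun x hx => ?_, fun c x y => ?_⟩
  · ext i
    refine hsep i _ fun z => ?_
    have := hx (DirectSum.of M i z)
    rwa [hB, Finset.sum_eq_single i
      (fun j _ hj => by rw [DirectSum.of_eq_of_ne i j z hj, map_zero]) (by simp),
      DirectSum.of_eq_same] at this
  · simp only [hB, DirectSum.smul_apply, hadj]

theorem of_isTorsion {M : Type*} [AddCommGroup M] [Module K[X] M] [Module K M]
    [IsScalarTower K K[X] M] [Module.Finite K[X] M] (hM : Module.IsTorsion K[X] M) :
    HasSelfAdjointForm K M := by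
  classical
  obtain ⟨ι, _, p, hp, e, ⟨ψ⟩⟩ := Module.equiv_directSum_of_isTorsion hM
  exact of_linearEquiv ψ <| directSum fun i =>
    quotient_span_singleton (pow_ne_zero _ (hp i).ne_zero)

end HasSelfAdjointForm

theorem LinearMap.exists_symm_separatingLeft_isAdjointPair {K V : Type*} [Field K]
    [AddCommGroup V] [Module K V] [FiniteDimensional K V] (φ : V →ₗ[K] V) :
    ∃ B : V →ₗ[K] V →ₗ[K] K, (∀ x y, B x y = B y x) ∧ B.SeparatingLeft ∧
      B.IsAdjointPair B φ φ := by
  obtain ⟨B, hsymm, hsep, hadj⟩ :=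
    HasSelfAdjointForm.of_isTorsion (Module.AEval.isTorsion_of_finiteDimensional K V φ)
  let o := (Module.AEval'.of φ).toLinearMap
  refine ⟨B.compl₁₂ o o, fun x y => hsymm _ _, fun x hx => ?_, fun x y => ?_⟩
  · exact (Module.AEval'.of φ).map_eq_zero_iff.1
      (hsep _ fun z => by simpa [o] using hx ((Module.AEval'.of φ).symm z))
  · simpa [o, Module.AEval'.X_smul_of] using hadj X (Module.AEval'.of φ x) (Module.AEval'.of φ y)

namespace Matrix

theorem exists_isSymm_det_ne_zero_transpose_mul_eq {K n : Type*} [Field K] [Fintype n]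
    [DecidableEq n] (A : Matrix n n K) :
    ∃ S : Matrix n n K, S.IsSymm ∧ S.det ≠ 0 ∧ Aᵀ * S = S * A := by
  obtain ⟨B, hsymm, hsep, hadj⟩ := LinearMap.exists_symm_separatingLeft_isAdjointPair (toLin' A)
  have hB := toLinearMap₂'_toMatrix' (R := K) B
  refine ⟨LinearMap.toMatrix₂' K B, ?_, ?_, ?_⟩
  · ext i j
    simp [LinearMap.toMatrix₂'_apply, hsymm]
  · rw [← LinearMap.separatingLeft_toLinearMap₂'_iff_det_ne_zero, hB]
    exact hsep
  · change IsAdjointPair _ _ A A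
    rw [← isAdjointPair_toLinearMap₂', hB]
    exact hadj

section OrderedField

variable {K n : Type*} [Field K] [LinearOrder K] [IsStrictOrderedRing K] [Fintype n]

theorem linearIndependent_of_pairwise_dotProduct_eq_zero {ι : Type*} {v : ι → n → K}
    (hv : ∀ i, v i ≠ 0) (horth : Pairwise fun i j => v i ⬝ᵥ v j = 0) :
    LinearIndependent K v := by
  rw [linearIndependent_iff']
  intro s g hg i hi
  have := congrArg (· ⬝ᵥ v i) hg
  simp only [sum_dotProduct, smul_dotProduct, smul_eq_mul, zero_dotProduct] at this
  rw [Finset.sum_eq_single i (fun j _ hji => by rw [horth hji, mul_zero]) (absurd hi)] at this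
  exact (mul_eq_zero.1 this).resolve_right (mt dotProduct_self_eq_zero.1 (hv i))

/-- If `A + μ C` is singular for `card n + 1` distinct values of `μ`, the `C`-images of the
corresponding kernel vectors are pairwise orthogonal, because `Aᵀ C` is symmetric. -/
theorem exists_det_add_smul_ne_zero [DecidableEq n] {A C : Matrix n n K}
    (hAC : Aᵀ * C = Cᵀ * A) (hinj : ∀ x, A *ᵥ x = 0 → C *ᵥ x = 0 → x = 0) :
    ∃ μ : K, (A + μ • C).det ≠ 0 := by
  by_contra! hsing
  choose x hx0 hx using fun i : Fin (Fintype.card n + 1) =>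
    exists_mulVec_eq_zero_iff.2 (hsing i)
  have hAx : ∀ i, A *ᵥ x i = -((i : ℕ) : K) • C *ᵥ x i := fun i => by
    rw [neg_smul, eq_neg_iff_add_eq_zero, ← smul_mulVec, ← add_mulVec]
    exact hx i
  have hv : ∀ i, C *ᵥ x i ≠ 0 := fun i hC =>
    hx0 i (hinj _ (by rw [hAx, hC, smul_zero]) hC)
  have hsymm : ∀ y z, (A *ᵥ y) ⬝ᵥ (C *ᵥ z) = (C *ᵥ y) ⬝ᵥ (A *ᵥ z) := fun y z => by
    rw [dotProduct_mulVec, ← vecMul_transpose, vecMul_vecMul, hAC, ← vecMul_vecMul,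
      vecMul_transpose, ← dotProduct_mulVec]
  have horth : Pairwise fun i j => (C *ᵥ x i) ⬝ᵥ (C *ᵥ x j) = 0 := fun i j hij => by
    have h := hsymm (x i) (x j)
    rw [hAx, hAx, smul_dotProduct, dotProduct_smul, smul_eq_mul, smul_eq_mul, neg_mul, neg_mul,
      neg_inj, ← sub_eq_zero, ← sub_mul] at h
    refine (mul_eq_zero.1 h).resolve_left (sub_ne_zero.2 fun h' => hij (Fin.ext ?_))
    exact_mod_cast h'
  have := (linearIndependent_of_pairwise_dotProduct_eq_zero hv horth).fintype_card_le_finrank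
  simp at this

end OrderedField

theorem isSymm_mul_inv_of_transpose_mul_eq {R n : Type*} [CommRing R] [Fintype n]
    [DecidableEq n] {M N : Matrix n n R} (hMN : Mᵀ * N = Nᵀ * M) (hM : IsUnit M.det) :
    (N * M⁻¹).IsSymm := by
  rw [IsSymm, transpose_mul, transpose_nonsing_inv]
  calc Mᵀ⁻¹ * Nᵀ = Mᵀ⁻¹ * (Nᵀ * M) * M⁻¹ := by
        rw [Matrix.mul_assoc, Matrix.mul_assoc, mul_nonsing_inv _ hM, Matrix.mul_one]
    _ = N * M⁻¹ := by
        rw [← hMN, ← Matrix.mul_assoc, nonsing_inv_mul _ (by rwa [det_transpose]), Matrix.one_mul]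

variable {n o R : Type*} [Fintype n] [DecidableEq n] [Ring R]

theorem fromBlocks_upper_neg_mul_cancel (S : Matrix n n R) (M : Matrix (n ⊕ n) o R) :
    (fromBlocks 1 (-S) 0 1 : Matrix (n ⊕ n) (n ⊕ n) R) *
      ((fromBlocks 1 S 0 1 : Matrix (n ⊕ n) (n ⊕ n) R) * M) = M := by
  rw [← Matrix.mul_assoc, fromBlocks_multiply]
  simp

theorem fromBlocks_lower_neg_mul_cancel (S : Matrix n n R) (M : Matrix (n ⊕ n) o R) :
    (fromBlocks 1 0 (-S) 1 : Matrix (n ⊕ n) (n ⊕ n) R) *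
      ((fromBlocks 1 0 S 1 : Matrix (n ⊕ n) (n ⊕ n) R) * M) = M := by
  rw [← Matrix.mul_assoc, fromBlocks_multiply]
  simp

end Matrix

namespace SymplecticGroup

section CommRing

variable {l R : Type*} [DecidableEq l] [Fintype l] [CommRing R]

theorem fromBlocks_upper_mem {S : Matrix l l R} (hS : S.IsSymm) :
    fromBlocks 1 S 0 1 ∈ symplecticGroup l R :=
  fromBlocks_mem_iff.2 ⟨by simp, by simp [hS.eq], by simp⟩

theorem fromBlocks_lower_mem {S : Matrix l l R} (hS : S.IsSymm) :
    fromBlocks 1 0 S 1 ∈ symplecticGroup l R :=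
  fromBlocks_mem_iff.2 ⟨by simp [hS.eq], by simp, by simp⟩

theorem eq_upper_mul_lower_mul_upper {A B C D : Matrix l l R}
    (hM : fromBlocks A B C D ∈ symplecticGroup l R) (hC : C.IsSymm) (hCdet : IsUnit C.det) :
    ∃ a c : Matrix l l R, a.IsSymm ∧ c.IsSymm ∧
      fromBlocks A B C D = fromBlocks 1 a 0 1 * fromBlocks 1 0 C 1 * fromBlocks 1 c 0 1 := by
  obtain ⟨hAC, hBD, hAD⟩ := fromBlocks_mem_iff.1 hM
  have hCinv : C⁻¹ᵀ = C⁻¹ := by rw [transpose_nonsing_inv, hC.eq]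
  have hAC' : A * C⁻¹ = C⁻¹ * Aᵀ := by
    rw [← (isSymm_mul_inv_of_transpose_mul_eq hAC.symm hCdet).eq, transpose_mul, hCinv]
  rw [hC.eq] at hAD
  have hB : B = C⁻¹ * (Aᵀ * D - 1) := by
    rw [← hAD, sub_sub_cancel, ← Matrix.mul_assoc, nonsing_inv_mul _ hCdet, Matrix.one_mul]
  have hDC : C⁻¹ * D = Dᵀ * C⁻¹ := by
    rw [hB, transpose_mul, transpose_sub, transpose_mul, transpose_one, hCinv,
      transpose_transpose] at hBD
    simp only [Matrix.sub_mul, Matrix.mul_sub, Matrix.one_mul, Matrix.mul_one,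
      Matrix.mul_assoc] at hBD
    rwa [← Matrix.mul_assoc A, hAC', Matrix.mul_assoc, sub_right_inj] at hBD
  refine ⟨(A - 1) * C⁻¹, C⁻¹ * (D - 1), ?_, ?_, ?_⟩
  · rw [IsSymm, Matrix.sub_mul, Matrix.one_mul, transpose_sub, transpose_mul, hCinv, hAC']
  · rw [IsSymm, Matrix.mul_sub, transpose_sub, Matrix.mul_one, hCinv, transpose_mul, hCinv, hDC]
  · have hA : 1 + (A - 1) * C⁻¹ * C = A := by
      rw [Matrix.mul_assoc, nonsing_inv_mul _ hCdet, Matrix.mul_one, add_sub_cancel]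
    simp only [fromBlocks_multiply, Matrix.mul_one, Matrix.one_mul, Matrix.mul_zero,
      add_zero, zero_add, hA]
    congr
    · rw [hB]
      simp only [Matrix.mul_sub, Matrix.sub_mul, ← Matrix.mul_assoc, hAC', Matrix.mul_one,
        Matrix.one_mul]
      abel
    · rw [← Matrix.mul_assoc, mul_nonsing_inv _ hCdet, Matrix.one_mul, sub_add_cancel]

end CommRing

section OrderedField

variable {K l : Type*} [Field K] [LinearOrder K] [IsStrictOrderedRing K] [DecidableEq l]
  [Fintype l]

theorem exists_eq_upper_mul_lower_mul {M : Matrix (l ⊕ l) (l ⊕ l) K}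
    (hM : M ∈ symplecticGroup l K) :
    ∃ s t : Matrix l l K, s.IsSymm ∧ t.IsSymm ∧ ∃ A B C D : Matrix l l K, C.IsSymm ∧
      IsUnit C.det ∧ fromBlocks A B C D ∈ symplecticGroup l K ∧
      M = fromBlocks 1 s 0 1 * fromBlocks 1 0 t 1 * fromBlocks A B C D := by
  obtain ⟨A, B, C, D, rfl⟩ : ∃ A B C D, M = fromBlocks A B C D :=
    ⟨_, _, _, _, M.fromBlocks_toBlocks.symm⟩
  obtain ⟨hAC, -, hAD⟩ := fromBlocks_mem_iff.1 hM
  have hinj : ∀ x, A *ᵥ x = 0 → C *ᵥ x = 0 → x = 0 := fun x hA hC => by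
    have h : Dᵀ * A - Bᵀ * C = 1 := by simpa using congrArg transpose hAD
    rw [← one_mulVec x, ← h, sub_mulVec, ← mulVec_mulVec, ← mulVec_mulVec, hA, hC, mulVec_zero,
      mulVec_zero, sub_zero]
  obtain ⟨μ, hμ⟩ := exists_det_add_smul_ne_zero hAC hinj
  set A₁ := A + μ • C
  set B₁ := B + μ • D
  have h₁ : fromBlocks 1 (μ • 1) 0 1 * fromBlocks A B C D = fromBlocks A₁ B₁ C D := by
    simp [fromBlocks_multiply, A₁, B₁]
  have hM₁ : fromBlocks A₁ B₁ C D ∈ symplecticGroup l K :=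
    h₁ ▸ mul_mem (fromBlocks_upper_mem (isSymm_one.smul μ)) hM
  obtain ⟨S, hS, hSdet, hSA⟩ := exists_isSymm_det_ne_zero_transpose_mul_eq A₁
  set t := S - C * A₁⁻¹
  have ht : t.IsSymm :=
    hS.sub (isSymm_mul_inv_of_transpose_mul_eq (fromBlocks_mem_iff.1 hM₁).1
      (isUnit_iff_ne_zero.2 hμ))
  have h₂ : fromBlocks 1 0 t 1 * fromBlocks A₁ B₁ C D =
      fromBlocks A₁ B₁ (S * A₁) (t * B₁ + D) := by
    simp only [fromBlocks_multiply, Matrix.one_mul, Matrix.zero_mul, add_zero]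
    rw [Matrix.sub_mul, Matrix.mul_assoc, nonsing_inv_mul _ (isUnit_iff_ne_zero.2 hμ),
      Matrix.mul_one, sub_add_cancel]
  refine ⟨-(μ • 1), -t, (isSymm_one.smul μ).neg, ht.neg, A₁, B₁, S * A₁, t * B₁ + D,
    by rw [IsSymm, transpose_mul, hS.eq, hSA], ?_, h₂ ▸ mul_mem (fromBlocks_lower_mem ht) hM₁, ?_⟩
  · rw [det_mul]
    exact isUnit_iff_ne_zero.2 (mul_ne_zero hSdet hμ)
  · rw [← h₂, ← h₁, Matrix.mul_assoc, fromBlocks_lower_neg_mul_cancel,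
      fromBlocks_upper_neg_mul_cancel]

theorem exists_eq_upper_lower_upper_lower_upper {M : Matrix (l ⊕ l) (l ⊕ l) K}
    (hM : M ∈ symplecticGroup l K) :
    ∃ S : Fin 5 → Matrix l l K, (∀ i, (S i).IsSymm) ∧
      M = fromBlocks 1 (S 4) 0 1 * fromBlocks 1 0 (S 3) 1 * fromBlocks 1 (S 2) 0 1 *
        fromBlocks 1 0 (S 1) 1 * fromBlocks 1 (S 0) 0 1 := by
  obtain ⟨s, t, hs, ht, A, B, C, D, hC, hCdet, hK, rfl⟩ := exists_eq_upper_mul_lower_mul hM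
  obtain ⟨a, c, ha, hc, hK⟩ := eq_upper_mul_lower_mul_upper hK hC hCdet
  refine ⟨![c, C, a, t, s], fun i => ?_, ?_⟩
  · fin_cases i <;> assumption
  · simp only [hK, Matrix.mul_assoc]
    rfl

end OrderedField

end SymplecticGroup

theorem transpose_mul_Jmat_mul_eq_iff {d : ℕ} {H : Matrix (Fin d ⊕ Fin d) (Fin d ⊕ Fin d) ℝ} :
    Hᵀ * Jmat d * H = Jmat d ↔ H ∈ symplecticGroup (Fin d) ℝ := by
  have hJ : Jmat d = -J (Fin d) ℝ := by simp [Jmat, J, fromBlocks_neg]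
  rw [SymplecticGroup.mem_iff', hJ, Matrix.mul_neg, Matrix.neg_mul, neg_inj]

/-- **Unit triangular factorization of the matrix symplectic group (SP = L₉).**
Every real `2d × 2d` symplectic matrix `H` (i.e. `Hᵀ J H = J`) is a product
`P₉ P₈ ⋯ P₂ P₁` where `Pᵢ = [[I, Sᵢ],[0, I]]` for odd `i` and
`Pᵢ = [[I, 0],[Sᵢ, I]]` for even `i`, with each `Sᵢ` symmetric.
(Here `S i` for `i : Fin 9` plays the role of `S_{i+1}`.) -/
theorem unit_triangular_factorization (d : ℕ)
    (H : Matrix (Fin d ⊕ Fin d) (Fin d ⊕ Fin d) ℝ)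
    (hH : Hᵀ * Jmat d * H = Jmat d) :
    ∃ S : Fin 9 → Matrix (Fin d) (Fin d) ℝ, (∀ i, (S i)ᵀ = S i) ∧
      H = Matrix.fromBlocks 1 (S 8) 0 1 * Matrix.fromBlocks 1 0 (S 7) 1 *
          Matrix.fromBlocks 1 (S 6) 0 1 * Matrix.fromBlocks 1 0 (S 5) 1 *
          Matrix.fromBlocks 1 (S 4) 0 1 * Matrix.fromBlocks 1 0 (S 3) 1 *
          Matrix.fromBlocks 1 (S 2) 0 1 * Matrix.fromBlocks 1 0 (S 1) 1 *
          Matrix.fromBlocks 1 (S 0) 0 1 := by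
  obtain ⟨S, hS, hH⟩ :=
    SymplecticGroup.exists_eq_upper_lower_upper_lower_upper (transpose_mul_Jmat_mul_eq_iff.1 hH)
  refine ⟨![S 0, S 1, S 2, S 3, S 4, 0, 0, 0, 0], fun i => ?_, ?_⟩
  · fin_cases i <;> first | exact hS _ | exact transpose_zero
  · simp [hH, fromBlocks_one, Matrix.mul_assoc]
end

section
/- Generating function criterion for symplecticity: let S : R^d x R^d -> R be a twice continuously differentiable function of (P, q), and let Phi : R^{2d} -> R^{2d} be a differentiable map sending (p, q) to (P, Q) such that for every (p, q), writing (P, Q) = Phi(p, q), the relations Q = (dS/dP)(P, q) and p = (dS/dq)(P, q) hold. Then Phi is symplectic: its Jacobian matrix satisfies (D Phi)^T J (D Phi) = J at every point. -/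
/-!
Write `g(p, q) = (P, q)`. The two defining relations say that the differential of `S` at `g(x)` is
the covector `(u, w) ↦ ⟨Q, u⟩ + ⟨p, w⟩`. Differentiating this identity in `x` expresses
`D²S(g x) (Dg v) (u, w)` as `⟨DQ v, u⟩ + ⟨v_p, w⟩`; evaluating at `(u, w) = Dg w` and using the
symmetry of the Hessian of `S` in `v` and `w` is exactly `ω(DΦ v, DΦ w) = ω(v, w)` for the
symplectic form `ω`, which is the matrix identity `DΦᵀ J DΦ = J`.
-/

open Matrix

noncomputable def jac (d : ℕ) (Φ : ((Fin d ⊕ Fin d) → ℝ) → ((Fin d ⊕ Fin d) → ℝ))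
    (x : (Fin d ⊕ Fin d) → ℝ) : Matrix (Fin d ⊕ Fin d) (Fin d ⊕ Fin d) ℝ :=
  Matrix.of fun i j => fderiv ℝ Φ x (Pi.single j 1) i

theorem Matrix.transpose_mul_mul_toMatrix'_eq_self {R n : Type*} [CommSemiring R] [Fintype n]
    [DecidableEq n] (M : Matrix n n R) (L : (n → R) →ₗ[R] n → R)
    (hL : ∀ v w, M.toLinearMap₂' R (L v) (L w) = M.toLinearMap₂' R v w) :
    (LinearMap.toMatrix' L)ᵀ * M * LinearMap.toMatrix' L = M := by
  have hcompl : (M.toLinearMap₂' R).compl₁₂ L L = M.toLinearMap₂' R := LinearMap.ext₂ hL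
  calc (LinearMap.toMatrix' L)ᵀ * M * LinearMap.toMatrix' L
      = LinearMap.toMatrix₂' R ((M.toLinearMap₂' R).compl₁₂ L L) := by
        rw [LinearMap.toMatrix₂'_compl₁₂, LinearMap.toMatrix'_toLinearMap₂']
    _ = M := by rw [hcompl, LinearMap.toMatrix'_toLinearMap₂']

theorem LinearMap.apply_eq_dotProduct_single {R ι : Type*} [CommSemiring R] [Fintype ι]
    [DecidableEq ι] (L : (ι → R) →ₗ[R] R) (u : ι → R) :
    L u = (fun i => L (Pi.single i 1)) ⬝ᵥ u := by
  conv_lhs => rw [pi_eq_sum_univ' u]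
  simp [dotProduct, mul_comm]

theorem toLinearMap₂'_Jmat_apply (d : ℕ) (v w : Fin d ⊕ Fin d → ℝ) :
    (Jmat d).toLinearMap₂' ℝ v w =
      (v ∘ Sum.inl) ⬝ᵥ (w ∘ Sum.inr) - (v ∘ Sum.inr) ⬝ᵥ (w ∘ Sum.inl) := by
  simp [Matrix.toLinearMap₂'_apply', Jmat, fromBlocks_mulVec, dotProduct, Fintype.sum_sum_type,
    Matrix.neg_mulVec, sub_eq_add_neg]

theorem jac_eq_toMatrix' (d : ℕ) (Φ : (Fin d ⊕ Fin d → ℝ) → Fin d ⊕ Fin d → ℝ)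
    (x : Fin d ⊕ Fin d → ℝ) : jac d Φ x = LinearMap.toMatrix' (fderiv ℝ Φ x : _ →ₗ[ℝ] _) :=
  rfl

section Calculus

variable {𝕜 X V W : Type*} [NontriviallyNormedField 𝕜]
  [NormedAddCommGroup X] [NormedSpace 𝕜 X] [NormedAddCommGroup V] [NormedSpace 𝕜 V]
  [NormedAddCommGroup W] [NormedSpace 𝕜 W]

theorem fderiv_comp_prodMk_left_apply {f : X × V → W} {a : X} {b : V}
    (hf : DifferentiableAt 𝕜 f (a, b)) (u : X) :
    fderiv 𝕜 (fun e => f (e, b)) a u = fderiv 𝕜 f (a, b) (u, 0) :=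
  DFunLike.congr_fun (hf.hasFDerivAt.comp a (hasFDerivAt_prodMk_left (𝕜 := 𝕜) a b)).fderiv u

theorem fderiv_comp_prodMk_right_apply {f : X × V → W} {a : X} {b : V}
    (hf : DifferentiableAt 𝕜 f (a, b)) (u : V) :
    fderiv 𝕜 (fun e => f (a, e)) b u = fderiv 𝕜 f (a, b) (0, u) :=
  DFunLike.congr_fun (hf.hasFDerivAt.comp b (hasFDerivAt_prodMk_right (𝕜 := 𝕜) a b)).fderiv u

theorem fderiv_comp_right_apply {ι κ : Type*} [Fintype ι] [Fintype κ] {h : X → ι → 𝕜} {x : X}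
    (hh : DifferentiableAt 𝕜 h x) (e : κ → ι) (v : X) :
    fderiv 𝕜 (fun y => h y ∘ e) x v = fderiv 𝕜 h x v ∘ e := by
  let ℓ : (ι → 𝕜) →L[𝕜] κ → 𝕜 := ContinuousLinearMap.pi fun k => ContinuousLinearMap.proj (e k)
  rw [show (fun y => h y ∘ e) = ℓ ∘ h from rfl, (ℓ.hasFDerivAt.comp x hh.hasFDerivAt).fderiv]
  rfl

theorem DifferentiableAt.dotProduct_const {ι : Type*} [Fintype ι] {h : X → ι → 𝕜} {x : X}
    (hh : DifferentiableAt 𝕜 h x) (c : ι → 𝕜) :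
    DifferentiableAt 𝕜 (fun y => h y ⬝ᵥ c) x := by
  simp only [dotProduct]
  fun_prop

theorem fderiv_dotProduct_const_apply {ι : Type*} [Fintype ι] {h : X → ι → 𝕜} {x : X}
    (hh : DifferentiableAt 𝕜 h x) (c : ι → 𝕜) (v : X) :
    fderiv 𝕜 (fun y => h y ⬝ᵥ c) x v = fderiv 𝕜 h x v ⬝ᵥ c := by
  let ℓ : (ι → 𝕜) →L[𝕜] 𝕜 := ∑ i, c i • ContinuousLinearMap.proj i
  have hℓ : ∀ z, ℓ z = z ⬝ᵥ c := fun z => by simp [ℓ, dotProduct, mul_comm]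
  rw [show (fun y => h y ⬝ᵥ c) = ℓ ∘ h from funext fun y => (hℓ (h y)).symm,
    (ℓ.hasFDerivAt.comp x hh.hasFDerivAt).fderiv, ContinuousLinearMap.comp_apply, hℓ]

/-- Both sides equal `D²f(g x) (Dg v) (Dg w)`, so this is the symmetry of the second derivative
of `f` transported along `g`. -/
theorem fderiv_fderiv_comp_apply_comm {f : V → W} {g : X → V} {x : X} {n : WithTop ℕ∞}
    (hf : ContDiffAt 𝕜 n f (g x)) (hn : minSmoothness 𝕜 2 ≤ n) (hg : DifferentiableAt 𝕜 g x)
    (v w : X) :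
    fderiv 𝕜 (fun y => fderiv 𝕜 f (g y) (fderiv 𝕜 g x w)) x v =
      fderiv 𝕜 (fun y => fderiv 𝕜 f (g y) (fderiv 𝕜 g x v)) x w := by
  have hf' : DifferentiableAt 𝕜 (fderiv 𝕜 f) (g x) :=
    (hf.fderiv_right (m := 1) (le_minSmoothness.trans hn)).differentiableAt one_ne_zero
  have hchain : ∀ z, fderiv 𝕜 (fun y => fderiv 𝕜 f (g y) z) x =
      ContinuousLinearMap.apply 𝕜 W z ∘L fderiv 𝕜 (fderiv 𝕜 f) (g x) ∘L fderiv 𝕜 g x := fun z =>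
    ((ContinuousLinearMap.apply 𝕜 W z).hasFDerivAt.comp x
      (hf'.hasFDerivAt.comp x hg.hasFDerivAt)).fderiv
  simp only [hchain, ContinuousLinearMap.comp_apply, ContinuousLinearMap.apply_apply]
  exact hf.isSymmSndFDerivAt hn _ _

end Calculus

section GeneratingFunction

variable {d : ℕ} {S : (Fin d → ℝ) → (Fin d → ℝ) → ℝ} {Φ : (Fin d ⊕ Fin d → ℝ) → Fin d ⊕ Fin d → ℝ}

def IsGeneratingFunction (S : (Fin d → ℝ) → (Fin d → ℝ) → ℝ)
    (Φ : (Fin d ⊕ Fin d → ℝ) → Fin d ⊕ Fin d → ℝ) : Prop :=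
  (∀ x : (Fin d ⊕ Fin d) → ℝ, ∀ a : Fin d,
    Φ x (Sum.inr a) =
      fderiv ℝ (fun P => S P (fun b => x (Sum.inr b))) (fun b => Φ x (Sum.inl b)) (Pi.single a 1)) ∧
  (∀ x : (Fin d ⊕ Fin d) → ℝ, ∀ a : Fin d,
    x (Sum.inl a) =
      fderiv ℝ (fun q => S (fun b => Φ x (Sum.inl b)) q) (fun b => x (Sum.inr b)) (Pi.single a 1))

theorem IsGeneratingFunction.fderiv_apply (hSΦ : IsGeneratingFunction S Φ)
    (hS : Differentiable ℝ (fun Pq : (Fin d → ℝ) × (Fin d → ℝ) => S Pq.1 Pq.2))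
    (y : Fin d ⊕ Fin d → ℝ) (u w : Fin d → ℝ) :
    fderiv ℝ (fun Pq : (Fin d → ℝ) × (Fin d → ℝ) => S Pq.1 Pq.2) (Φ y ∘ Sum.inl, y ∘ Sum.inr)
      (u, w) = (Φ y ∘ Sum.inr) ⬝ᵥ u + (y ∘ Sum.inl) ⬝ᵥ w := by
  have hsplit : (u, w) = (u, 0) + (0, w) := by simp
  rw [hsplit, map_add, ← fderiv_comp_prodMk_left_apply (hS _),
    ← fderiv_comp_prodMk_right_apply (hS _), ← ContinuousLinearMap.coe_coe,
    LinearMap.apply_eq_dotProduct_single, ← ContinuousLinearMap.coe_coe,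
    LinearMap.apply_eq_dotProduct_single]
  congr 2
  · exact funext fun a => (hSΦ.1 y a).symm
  · exact funext fun a => (hSΦ.2 y a).symm

theorem IsGeneratingFunction.fderiv_fderiv_apply (hSΦ : IsGeneratingFunction S Φ)
    (hS : Differentiable ℝ (fun Pq : (Fin d → ℝ) × (Fin d → ℝ) => S Pq.1 Pq.2))
    (hΦ : Differentiable ℝ Φ) (x v : Fin d ⊕ Fin d → ℝ) (u w : Fin d → ℝ) :
    fderiv ℝ (fun y => fderiv ℝ (fun Pq : (Fin d → ℝ) × (Fin d → ℝ) => S Pq.1 Pq.2)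
        (Φ y ∘ Sum.inl, y ∘ Sum.inr) (u, w)) x v =
      (fderiv ℝ Φ x v ∘ Sum.inr) ⬝ᵥ u + (v ∘ Sum.inl) ⬝ᵥ w := by
  have hΦr : DifferentiableAt ℝ (fun y => Φ y ∘ Sum.inr) x := by fun_prop
  have hid : DifferentiableAt ℝ (fun y : Fin d ⊕ Fin d → ℝ => y ∘ Sum.inl) x := by fun_prop
  simp only [hSΦ.fderiv_apply hS]
  rw [fderiv_fun_add (hΦr.dotProduct_const u) (hid.dotProduct_const w), _root_.add_apply,
    fderiv_dotProduct_const_apply hΦr, fderiv_dotProduct_const_apply hid,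
    fderiv_comp_right_apply (hΦ x),
    fderiv_comp_right_apply (X := Fin d ⊕ Fin d → ℝ) differentiableAt_fun_id, fderiv_fun_id]
  rfl

theorem IsGeneratingFunction.toLinearMap₂'_Jmat_fderiv (hSΦ : IsGeneratingFunction S Φ)
    (hS : ContDiff ℝ 2 (fun Pq : (Fin d → ℝ) × (Fin d → ℝ) => S Pq.1 Pq.2))
    (hΦ : Differentiable ℝ Φ) (x v w : Fin d ⊕ Fin d → ℝ) :
    (Jmat d).toLinearMap₂' ℝ (fderiv ℝ Φ x v) (fderiv ℝ Φ x w) = (Jmat d).toLinearMap₂' ℝ v w := by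
  set g : (Fin d ⊕ Fin d → ℝ) → (Fin d → ℝ) × (Fin d → ℝ) :=
    fun y => (Φ y ∘ Sum.inl, y ∘ Sum.inr)
  have hΦl : DifferentiableAt ℝ (fun y => Φ y ∘ Sum.inl) x := by fun_prop
  have hid : DifferentiableAt ℝ (fun y : Fin d ⊕ Fin d → ℝ => y ∘ Sum.inr) x := by fun_prop
  have hDg : ∀ w, fderiv ℝ g x w = (fderiv ℝ Φ x w ∘ Sum.inl, w ∘ Sum.inr) := fun w => by
    rw [DifferentiableAt.fderiv_prodMk hΦl hid]
    simp [fderiv_comp_right_apply (hΦ x),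
      fderiv_comp_right_apply (X := Fin d ⊕ Fin d → ℝ) differentiableAt_fun_id]
  have hsymm := fderiv_fderiv_comp_apply_comm hS.contDiffAt (by simp) (hΦl.prodMk hid) v w
  rw [hDg, hDg, hSΦ.fderiv_fderiv_apply (hS.differentiable two_ne_zero) hΦ,
    hSΦ.fderiv_fderiv_apply (hS.differentiable two_ne_zero) hΦ] at hsymm
  rw [toLinearMap₂'_Jmat_apply, toLinearMap₂'_Jmat_apply]
  linarith [dotProduct_comm (fderiv ℝ Φ x w ∘ Sum.inr) (fderiv ℝ Φ x v ∘ Sum.inl),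
    dotProduct_comm (w ∘ Sum.inl) (v ∘ Sum.inr)]

end GeneratingFunction

/-- **Generating function criterion for symplecticity.** Let `S(P, q)` be a `C²`
function and let `Φ : (p, q) ↦ (P, Q)` be a differentiable map such that for every
`(p, q)`, writing `(P, Q) = Φ(p, q)`, the relations `Qₐ = ∂S/∂Pₐ (P, q)` and
`pₐ = ∂S/∂qₐ (P, q)` hold. Then the Jacobian of `Φ` is everywhere symplectic.
(Points of `ℝ^{2d}` are indexed by `Fin d ⊕ Fin d`, with the `inl` components playing
the role of `p` and the `inr` components the role of `q`.) -/
theorem generating_function_symplectic (d : ℕ)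
    (S : ((Fin d) → ℝ) → ((Fin d) → ℝ) → ℝ)
    (hS : ContDiff ℝ 2 (fun Pq : ((Fin d) → ℝ) × ((Fin d) → ℝ) => S Pq.1 Pq.2))
    (Φ : ((Fin d ⊕ Fin d) → ℝ) → ((Fin d ⊕ Fin d) → ℝ))
    (hΦ : Differentiable ℝ Φ)
    (hQ : ∀ x : (Fin d ⊕ Fin d) → ℝ, ∀ a : Fin d,
      Φ x (Sum.inr a) =
        fderiv ℝ (fun P => S P (fun b => x (Sum.inr b)))
          (fun b => Φ x (Sum.inl b)) (Pi.single a 1))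
    (hp : ∀ x : (Fin d ⊕ Fin d) → ℝ, ∀ a : Fin d,
      x (Sum.inl a) =
        fderiv ℝ (fun q => S (fun b => Φ x (Sum.inl b)) q)
          (fun b => x (Sum.inr b)) (Pi.single a 1)) :
    ∀ x, (jac d Φ x)ᵀ * Jmat d * jac d Φ x = Jmat d := by
  intro x
  have hSΦ : IsGeneratingFunction S Φ := ⟨hQ, hp⟩
  rw [jac_eq_toMatrix']
  exact (Jmat d).transpose_mul_mul_toMatrix'_eq_self _ (hSΦ.toLinearMap₂'_Jmat_fderiv hS hΦ x)
end

section
/- Symplecticity is preserved along the variational equation of a Hamiltonian system: let A : R -> R^{2d x 2d} be a map with A(t) symmetric for every t, and let Psi : R -> R^{2d x 2d} be differentiable with Psi'(t) = J^{-1} A(t) Psi(t) for all t and Psi(0)^T J Psi(0) = J. Then Psi(t)^T J Psi(t) = J for all t; i.e., Psi(t) is a symplectic matrix for every t. (This is the core of Poincare's theorem that the phase flow of a Hamiltonian system dy/dt = J^{-1} grad H(y) is a symplectic map, where A(t) is the Hessian of H along the solution and Psi(t) is the Jacobian of the flow with respect to the initial value.) -/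
/-!
Along `Ψ' = J⁻¹ A Ψ` the derivative of `Ψᵀ J Ψ` is `Ψᵀ (A (J⁻¹)ᵀ J + J J⁻¹ A) Ψ = Ψᵀ (-A + A) Ψ = 0`,
using only `Aᵀ = A` and `Jᵀ = -J`. So `Ψᵀ J Ψ` is constant, equal to its value `J` at `0`.
The argument works verbatim in any normed star algebra, with a right inverse `K` of `J` in place
of `J⁻¹`; matrices are made into one by the `L∞`-operator norm.
-/

open Matrix

section SkewForm

variable {𝔸 : Type*}

/-- The derivative of `star Ψ * J * Ψ` along `Ψ' = K * A * Ψ`, at the point `Ψ = P`. -/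
theorem star_mul_skew_mul_add_eq_zero [Ring 𝔸] [StarRing 𝔸] {J K A : 𝔸} (hJ : star J = -J)
    (hJK : J * K = 1) (hA : star A = A) (P : 𝔸) :
    star (K * A * P) * J * P + star P * J * (K * A * P) = 0 := by
  have hKJ : star K * J = -1 := by
    rw [← neg_neg J, ← hJ, mul_neg, ← star_mul, hJK, star_one]
  calc star (K * A * P) * J * P + star P * J * (K * A * P)
      = star P * A * (star K * J) * P + star P * (J * K) * A * P := by
        simp only [star_mul, hA, mul_assoc]
    _ = 0 := by
        rw [hKJ, hJK]
        noncomm_ring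

variable [NormedRing 𝔸] [NormedAlgebra ℝ 𝔸] [StarRing 𝔸] [StarModule ℝ 𝔸] [ContinuousStar 𝔸]

theorem star_mul_skew_mul_eq_of_hasDerivAt {J K : 𝔸} {A Ψ : ℝ → 𝔸} (hJ : star J = -J)
    (hJK : J * K = 1) (hA : ∀ t, star (A t) = A t)
    (hΨ : ∀ t, HasDerivAt Ψ (K * A t * Ψ t) t) (s t : ℝ) :
    star (Ψ s) * J * Ψ s = star (Ψ t) * J * Ψ t := by
  have hderiv : ∀ t, HasDerivAt (fun s => star (Ψ s) * J * Ψ s) 0 t := fun t => by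
    rw [← star_mul_skew_mul_add_eq_zero hJ hJK (hA t) (Ψ t)]
    exact ((hΨ t).star.mul_const J).mul (hΨ t)
  exact is_const_of_deriv_eq_zero (fun t => (hderiv t).differentiableAt)
    (fun t => (hderiv t).deriv) s t

end SkewForm

theorem Jmat_transpose (d : ℕ) : (Jmat d)ᵀ = -Jmat d := by
  simp [Jmat, fromBlocks_transpose, fromBlocks_neg]

theorem Jmat_mul_neg_Jmat (d : ℕ) : Jmat d * -Jmat d = 1 := by
  simp [Jmat, fromBlocks_multiply, fromBlocks_neg, ← fromBlocks_one]

theorem Jmat_mul_inv (d : ℕ) : Jmat d * (Jmat d)⁻¹ = 1 := by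
  rw [inv_eq_right_inv (Jmat_mul_neg_Jmat d), Jmat_mul_neg_Jmat]

attribute [local instance] Matrix.linftyOpNormedRing Matrix.linftyOpNormedAlgebra in
/-- **Symplecticity is preserved along the variational equation of a Hamiltonian
system.** If `A(t)` is symmetric for every `t`, `Ψ : ℝ → ℝ^{2d×2d}` satisfies
`Ψ'(t) = J⁻¹ A(t) Ψ(t)` (entrywise) for all `t`, and `Ψ(0)ᵀ J Ψ(0) = J`, then
`Ψ(t)ᵀ J Ψ(t) = J` for all `t`, i.e. `Ψ(t)` is symplectic for every `t`. -/
theorem variational_equation_symplectic (d : ℕ)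
    (A : ℝ → Matrix (Fin d ⊕ Fin d) (Fin d ⊕ Fin d) ℝ)
    (hA : ∀ t, (A t)ᵀ = A t)
    (Ψ : ℝ → Matrix (Fin d ⊕ Fin d) (Fin d ⊕ Fin d) ℝ)
    (hΨ : ∀ t, ∀ i j, HasDerivAt (fun s => Ψ s i j) (((Jmat d)⁻¹ * A t * Ψ t) i j) t)
    (h0 : (Ψ 0)ᵀ * Jmat d * Ψ 0 = Jmat d) :
    ∀ t, (Ψ t)ᵀ * Jmat d * Ψ t = Jmat d := by
  -- The `L∞`-operator norm induces the product topology, for which `star` is continuous.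
  have : @ContinuousStar (Matrix (Fin d ⊕ Fin d) (Fin d ⊕ Fin d) ℝ)
      PseudoMetricSpace.toUniformSpace.toTopologicalSpace _ := instContinuousStarMatrix
  have hstar (M : Matrix (Fin d ⊕ Fin d) (Fin d ⊕ Fin d) ℝ) : star M = Mᵀ :=
    conjTranspose_eq_transpose_of_trivial M
  have hΨ' (t : ℝ) : HasDerivAt Ψ ((Jmat d)⁻¹ * A t * Ψ t) t :=
    hasDerivAt_pi.2 fun i => hasDerivAt_pi.2 (hΨ t i)
  intro t
  simpa only [hstar, h0] using star_mul_skew_mul_eq_of_hasDerivAt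
    ((hstar _).trans (Jmat_transpose d)) (Jmat_mul_inv d) (fun t => (hstar _).trans (hA t)) hΨ' t 0
end
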